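/- (Generalized Cayley–Hamilton for non-square matrices, case m ≤ n) Let A ∈ M_{m×n} with m ≤ n, let p(x) = x^m + p_{m-1}x^{m-1} + ⋯ + p_0 be the characteristic polynomial of Π_A := A·Ψ_{n×m} ∈ M_{m×m}, and define DK-STP powers A^{⟨k⟩} := A ⊛ ⋯ ⊛ A (k factors). Then A^{⟨m+1⟩} + p_{m-1}·A^{⟨m⟩} + ⋯ + p_1·A^{⟨2⟩} + p_0·A = 0. -/
import Mathlib


open Matrix Kronecker Finset

noncomputable section

/-- The all-ones column vector of length `k`, viewed as a `k × 1` matrix. -/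
def onesCol (k : ℕ) : Matrix (Fin k) (Fin 1) ℝ := Matrix.of fun _ _ => 1

/-- `A ⊗ 1ᵀ_α`, reindexed to an ordinary `Fin`-indexed matrix. -/
def rightExpand {m n : ℕ} (A : Matrix (Fin m) (Fin n) ℝ) (α : ℕ) :
    Matrix (Fin m) (Fin (n * α)) ℝ :=
  Matrix.reindex (Equiv.prodUnique (Fin m) (Fin 1)) finProdFinEquiv (A ⊗ₖ (onesCol α)ᵀ)

/-- `B ⊗ 1_β`, reindexed to an ordinary `Fin`-indexed matrix. -/
def leftExpand {p q : ℕ} (B : Matrix (Fin p) (Fin q) ℝ) (β : ℕ) :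
    Matrix (Fin (p * β)) (Fin q) ℝ :=
  Matrix.reindex finProdFinEquiv (Equiv.prodUnique (Fin q) (Fin 1)) (B ⊗ₖ onesCol β)

theorem dk_dim_eq (n p : ℕ) :
    n * (Nat.lcm n p / n) = p * (Nat.lcm n p / p) := by
  rw [Nat.mul_div_cancel' (Nat.dvd_lcm_left n p),
    Nat.mul_div_cancel' (Nat.dvd_lcm_right n p)]

/-- The dimension keeping semi-tensor product (DK-STP)
`A ⊛ B := (A ⊗ 1ᵀ_{t/n})(B ⊗ 1_{t/p})`, `t = lcm(n,p)`. -/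
def dkstp {m n p q : ℕ} (A : Matrix (Fin m) (Fin n) ℝ) (B : Matrix (Fin p) (Fin q) ℝ) :
    Matrix (Fin m) (Fin q) ℝ :=
  rightExpand A (Nat.lcm n p / n) *
    (leftExpand B (Nat.lcm n p / p)).submatrix (Fin.cast (dk_dim_eq n p)) id

infixl:70 " ⊛ " => dkstp

/-- The bridge matrix `Ψ_{n×p} := (I_n ⊗ 1ᵀ_{t/n})(I_p ⊗ 1_{t/p})`. -/
def bridge (n p : ℕ) : Matrix (Fin n) (Fin p) ℝ :=
  (1 : Matrix (Fin n) (Fin n) ℝ) ⊛ (1 : Matrix (Fin p) (Fin p) ℝ)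

/-- `x ⊗ 1_α`, as a vector of length `m * α`. -/
def vecExpand {m : ℕ} (x : Fin m → ℝ) (α : ℕ) : Fin (m * α) → ℝ :=
  fun i => x (finProdFinEquiv.symm i).1

/-- The VV-STP `x ⊙ y := (x ⊗ 1_{t/m})ᵀ(y ⊗ 1_{t/n})`, `t = lcm(m,n)`. -/
def vvstp {m n : ℕ} (x : Fin m → ℝ) (y : Fin n → ℝ) : ℝ :=
  vecExpand x (Nat.lcm m n / m) ⬝ᵥ
    fun i => vecExpand y (Nat.lcm m n / n) (Fin.cast (dk_dim_eq m n) i)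


/-- DK-STP powers: `dkpow A k = A^{⟨k+1⟩}`, i.e. `dkpow A 0 = A` and
`dkpow A (k+1) = A ⊛ dkpow A k`. -/
def dkpow {m n : ℕ} (A : Matrix (Fin m) (Fin n) ℝ) : ℕ → Matrix (Fin m) (Fin n) ℝ
  | 0 => A
  | k + 1 => A ⊛ dkpow A k

lemma rightExpand_eq {m n : ℕ} (A : Matrix (Fin m) (Fin n) ℝ) (α : ℕ) :
    rightExpand A α = A * rightExpand (1 : Matrix (Fin n) (Fin n) ℝ) α := by
  ext i j
  simp [rightExpand, Matrix.mul_apply, onesCol, Matrix.one_apply, mul_ite]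

lemma leftExpand_eq {p q : ℕ} (B : Matrix (Fin p) (Fin q) ℝ) (β : ℕ) :
    leftExpand B β = leftExpand (1 : Matrix (Fin p) (Fin p) ℝ) β * B := by
  ext i j
  simp [leftExpand, Matrix.mul_apply, onesCol, Matrix.one_apply, ite_mul]

lemma dkstp_eq {m n p q : ℕ} (A : Matrix (Fin m) (Fin n) ℝ)
    (B : Matrix (Fin p) (Fin q) ℝ) : A ⊛ B = A * bridge n p * B := by
  have hsub : ∀ (E : Matrix (Fin (p * (Nat.lcm n p / p))) (Fin p) ℝ),
      ((E * B).submatrix (Fin.cast (dk_dim_eq n p)) id)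
        = E.submatrix (Fin.cast (dk_dim_eq n p)) id * B := by
    intro E; ext i j; simp [Matrix.mul_apply]
  rw [dkstp, rightExpand_eq, leftExpand_eq, hsub, bridge, dkstp]
  simp only [Matrix.mul_assoc]

lemma dkpow_eq {m n : ℕ} (A : Matrix (Fin m) (Fin n) ℝ) (k : ℕ) :
    dkpow A k = (A * bridge n m) ^ k * A := by
  induction k with
  | zero => simp [dkpow]
  | succ k ih =>
      rw [dkpow, dkstp_eq, ih, pow_succ']
      simp only [Matrix.mul_assoc]

/-- generalized Cayley–Hamilton, case `m ≤ n`: if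
`p(x) = x^m + p_{m-1} x^{m-1} + ⋯ + p_0` is the characteristic polynomial of
`Π_A = A Ψ_{n×m}`, then `A^{⟨m+1⟩} + p_{m-1} A^{⟨m⟩} + ⋯ + p_0 A = 0`
(here `dkpow A k = A^{⟨k+1⟩}` and the leading coefficient `p_m = 1`). -/
theorem stmt16 {m n : ℕ} (hmn : m ≤ n) (A : Matrix (Fin m) (Fin n) ℝ) :
    ∑ k ∈ Finset.range (m + 1), (A * bridge n m).charpoly.coeff k • dkpow A k = 0 := by
  have hch := Matrix.aeval_self_charpoly (A * bridge n m)
  rw [Polynomial.aeval_eq_sum_range,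
    Matrix.charpoly_natDegree_eq_dim, Fintype.card_fin] at hch
  calc ∑ k ∈ Finset.range (m + 1), (A * bridge n m).charpoly.coeff k • dkpow A k
      = (∑ k ∈ Finset.range (m + 1),
          (A * bridge n m).charpoly.coeff k • (A * bridge n m) ^ k) * A := by
        rw [Matrix.sum_mul]
        exact Finset.sum_congr rfl fun k _ => by rw [dkpow_eq, Matrix.smul_mul]
    _ = 0 := by rw [hch, Matrix.zero_mul]
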